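/- arXiv:1404.6574 — 4 statements merged into one kernel-verified Lean document; each statement's English description precedes it below -/
import Mathlib

section
/- Suppose p, r, q are pairwise distinct integers with 1 ≤ p, r, q ≤ K and the word a satisfies a_p = a_r = ↑ and a_q = ↓. Then (p,q)^a_λ ∘ (r,q)^a_λ + (p,r)^a_λ ∘ (r,q)^a_λ + (p,q)^a_λ ∘ (r,p)^a_λ = 0 in End_k(V(a)). -/
open Finset

/-- The set of boxes of the pyramid associated to `lam` (`Box.1` is the column, 0-based). -/
abbrev Box {ℓ : ℕ} (lam : Fin ℓ → ℕ) : Type := (j : Fin ℓ) × Fin (lam j)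

/-- A sequence is unimodular: it weakly increases up to some index `κ` and weakly
decreases afterwards. -/
def Unimodular {ℓ : ℕ} (lam : Fin ℓ → ℕ) : Prop :=
  ∃ κ : Fin ℓ, (∀ i j : Fin ℓ, i ≤ j → j ≤ κ → lam i ≤ lam j) ∧
    (∀ i j : Fin ℓ, κ ≤ i → i ≤ j → lam j ≤ lam i)

/-- The free `k`-module `V(a)` with basis indexed by `K`-tuples of boxes. -/
abbrev V (k : Type*) [CommRing k] {ℓ : ℕ} (lam : Fin ℓ → ℕ) (K : ℕ) : Type _ :=
  (Fin K → Box lam) →₀ k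

/-- The modified transposition `(p,q)^a_λ` (positions are 0-based elements of `Fin K`;
the letter `↑` is `true` and `↓` is `false`). -/
noncomputable def modT (k : Type*) [CommRing k] {ℓ K : ℕ} (lam : Fin ℓ → ℕ)
    (a : Fin K → Bool) (p q : Fin K) : Module.End k (V k lam K) :=
  Finsupp.lift (V k lam K) k (Fin K → Box lam) (fun j =>
    if a q then
      if q < p then
        (if (j p).1 ≤ (j q).1 then Finsupp.single (j ∘ Equiv.swap p q) (1 : k) else 0)
      else
        (if (j q).1 < (j p).1 then -Finsupp.single (j ∘ Equiv.swap p q) (1 : k) else 0)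
    else
      if q < p then
        (if j p = j q then
          -∑ c ∈ univ.filter (fun c : Box lam => (j p).1 ≤ c.1),
            Finsupp.single (Function.update (Function.update j p c) q c) (1 : k)
        else 0)
      else
        (if j p = j q then
          ∑ c ∈ univ.filter (fun c : Box lam => c.1 < (j p).1),
            Finsupp.single (Function.update (Function.update j p c) q c) (1 : k)
        else 0))

/-! A modified transposition `(p,q)` multiplies a basis vector by
`modTCoeff q p t s = [s < t] - [q < p]` (negated when `a_q = ↑`), where `t, s` are columns.
All three composites kill `v_j` unless `j_r = j_q`; otherwise each is a sum, over boxes `d`, of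
multiples of the basis vector of `j` with `j_r := j_p` and `j_p = j_q := d`. With `x, y` the columns
of `j_p, j_r` and `[p < r] = 1 - [r < p]`, the three coefficients add up to
`([d<x] - [d<y])([x<y] - [d<y]) - ([q<r] - [q<p])([r<p] - [q<p])`, and
`([a<b] - [a<c])([b<c] - [a<c]) = 0` for any `a, b, c` in a linear order. -/

section Coefficients
variable (k : Type*) [CommRing k] {α ι κ : Type*} [LinearOrder α] [LinearOrder ι]
  [LinearOrder κ]

def ltIndicator (a b : α) : k := if a < b then 1 else 0

theorem ltIndicator_add_ltIndicator {a b : α} (hab : a ≠ b) :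
    ltIndicator k a b + ltIndicator k b a = 1 := by
  rcases hab.lt_or_gt with h | h <;> simp [ltIndicator, h, h.not_gt]

theorem ltIndicator_mul_self (a b : α) :
    ltIndicator k a b * ltIndicator k a b = ltIndicator k a b := by
  unfold ltIndicator
  split_ifs <;> simp

theorem ltIndicator_sub_mul_ltIndicator_sub (a b c : α) :
    (ltIndicator k a b - ltIndicator k a c) * (ltIndicator k b c - ltIndicator k a c) = 0 := by
  unfold ltIndicator
  split_ifs <;> first | ring1 | (exfalso; order)

def modTCoeff (q p : ι) (t s : κ) : k := ltIndicator k s t - ltIndicator k q p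

theorem modTCoeff_comm_relation {p r : ι} (hpr : p ≠ r) (q : ι) (x y d : κ) :
    modTCoeff k q p x d * modTCoeff k q r y x - modTCoeff k r p x d * modTCoeff k q r y d
      - modTCoeff k q p y d * modTCoeff k p r y x = 0 := by
  unfold modTCoeff
  linear_combination ltIndicator_sub_mul_ltIndicator_sub k d x y
    - ltIndicator_sub_mul_ltIndicator_sub k q r p
    + (ltIndicator k d y - ltIndicator k q p) * ltIndicator_add_ltIndicator k hpr
    + ltIndicator_mul_self k q p - ltIndicator_mul_self k d y

end Coefficients

section ModifiedTransposition
variable (k : Type*) [CommRing k] {ℓ K : ℕ} (lam : Fin ℓ → ℕ) (a : Fin K → Bool)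

theorem modT_single_of_up {p q : Fin K} (hq : a q = true) (j : Fin K → Box lam) (b : k) :
    modT k lam a p q (Finsupp.single j b) =
      Finsupp.single (j ∘ Equiv.swap p q) (-modTCoeff k q p (j p).1 (j q).1 * b) := by
  rw [modT, Finsupp.lift_apply, Finsupp.sum_single_index (by simp), if_pos hq]
  unfold modTCoeff ltIndicator
  split_ifs <;> simp [Finsupp.smul_single] <;> order

theorem modT_single_of_down {p q : Fin K} (hq : a q = false) (j : Fin K → Box lam) (b : k) :
    modT k lam a p q (Finsupp.single j b) =
      if j p = j q then
        ∑ c : Box lam, Finsupp.single (Function.update (Function.update j p c) q c)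
          (modTCoeff k q p (j p).1 c.1 * b)
      else 0 := by
  rw [modT, Finsupp.lift_apply, Finsupp.sum_single_index (by simp), if_neg (by simp [hq])]
  unfold modTCoeff ltIndicator
  split_ifs
  all_goals simp only [smul_neg, smul_zero, Finset.smul_sum, Finset.sum_filter,
    ← Finset.sum_neg_distrib]
  all_goals refine Finset.sum_congr rfl fun c _ => ?_
  all_goals split_ifs <;> simp [Finsupp.smul_single] <;> order

variable {p r q : Fin K} {j : Fin K → Box lam}

theorem modT_comp_modT_single_of_down_down (hpr : p ≠ r) (hpq : p ≠ q) (hq : a q = false)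
    (hj : j r = j q) (b : k) :
    modT k lam a p q (modT k lam a r q (Finsupp.single j b)) =
      ∑ d : Box lam, Finsupp.single
        (Function.update (Function.update (Function.update j r (j p)) p d) q d)
        (modTCoeff k q p (j p).1 d.1 * (modTCoeff k q r (j r).1 (j p).1 * b)) := by
  rw [modT_single_of_down k lam a hq, if_pos hj, map_sum]
  simp only [modT_single_of_down k lam a hq, Function.update_of_ne hpq, Function.update_of_ne hpr,
    Function.update_self, Finset.sum_ite_eq, Finset.mem_univ, if_true]
  refine Finset.sum_congr rfl fun d _ => ?_
  rw [Function.update_comm hpq.symm, Function.update_idem]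

theorem modT_comp_modT_single_of_up_down (hpr : p ≠ r) (hpq : p ≠ q) (hrq : r ≠ q)
    (hr : a r = true) (hq : a q = false) (hj : j r = j q) (b : k) :
    modT k lam a p r (modT k lam a r q (Finsupp.single j b)) =
      ∑ d : Box lam, Finsupp.single
        (Function.update (Function.update (Function.update j r (j p)) p d) q d)
        (-modTCoeff k r p (j p).1 d.1 * (modTCoeff k q r (j r).1 d.1 * b)) := by
  rw [modT_single_of_down k lam a hq, if_pos hj, map_sum]
  refine Finset.sum_congr rfl fun d _ => ?_
  rw [modT_single_of_up k lam a hr, Equiv.comp_swap_eq_update]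
  simp only [Function.update_of_ne hpq, Function.update_of_ne hpr, Function.update_of_ne hrq,
    Function.update_self]
  rw [Function.update_comm hrq.symm, Function.update_idem, Function.update_comm hpq.symm]

theorem modT_comp_modT_single_of_down_up (hpr : p ≠ r) (hpq : p ≠ q) (hrq : r ≠ q)
    (hp : a p = true) (hq : a q = false) (hj : j r = j q) (b : k) :
    modT k lam a p q (modT k lam a r p (Finsupp.single j b)) =
      ∑ d : Box lam, Finsupp.single
        (Function.update (Function.update (Function.update j r (j p)) p d) q d)
        (modTCoeff k q p (j r).1 d.1 * (-modTCoeff k p r (j r).1 (j p).1 * b)) := by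
  rw [modT_single_of_up k lam a hp, modT_single_of_down k lam a hq]
  simp only [Function.comp_apply, Equiv.swap_apply_right,
    Equiv.swap_apply_of_ne_of_ne hrq.symm hpq.symm, if_pos hj, Equiv.comp_swap_eq_update,
    Function.update_comm hpr, Function.update_idem]

end ModifiedTransposition

theorem modT_comm_relation_updown_general
    (k : Type*) [CommRing k] {ℓ K : ℕ}
    (lam : Fin ℓ → ℕ)
    (a : Fin K → Bool) (p r q : Fin K)
    (hpr : p ≠ r) (hpq : p ≠ q) (hrq : r ≠ q)
    (hp : a p = true) (hr : a r = true) (hq : a q = false) :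
    (modT k lam a p q) ∘ₗ (modT k lam a r q) +
      (modT k lam a p r) ∘ₗ (modT k lam a r q) +
        (modT k lam a p q) ∘ₗ (modT k lam a r p) = 0 := by
  refine Finsupp.lhom_ext fun j b => ?_
  simp only [LinearMap.add_apply, LinearMap.comp_apply, LinearMap.zero_apply]
  by_cases hj : j r = j q
  · rw [modT_comp_modT_single_of_down_down k lam a hpr hpq hq hj,
      modT_comp_modT_single_of_up_down k lam a hpr hpq hrq hr hq hj,
      modT_comp_modT_single_of_down_up k lam a hpr hpq hrq hp hq hj,
      ← Finset.sum_add_distrib, ← Finset.sum_add_distrib]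
    refine Finset.sum_eq_zero fun d _ => ?_
    rw [← Finsupp.single_add, ← Finsupp.single_add, ← Finsupp.single_zero]
    congr 1
    linear_combination b * modTCoeff_comm_relation k hpr q (j p).1 (j r).1 d.1
  · rw [modT_single_of_down k lam a hq, if_neg hj, modT_single_of_up k lam a hp,
      modT_single_of_down k lam a hq]
    simp [Equiv.swap_apply_of_ne_of_ne hrq.symm hpq.symm, hj]

/-- Lemma 4.2(iii): `(p,q)∘(r,q) + (p,r)∘(r,q) + (p,q)∘(r,p) = 0`
when `a_p = a_r = ↑` and `a_q = ↓`. -/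
theorem modT_comm_relation_updown
    (k : Type*) [CommRing k] {ℓ K : ℕ} (hℓ : 1 ≤ ℓ)
    (lam : Fin ℓ → ℕ) (hpos : ∀ j, 0 < lam j) (huni : Unimodular lam)
    (m : Fin ℓ → k)
    (a : Fin K → Bool) (p r q : Fin K)
    (hpr : p ≠ r) (hpq : p ≠ q) (hrq : r ≠ q)
    (hp : a p = true) (hr : a r = true) (hq : a q = false) :
    (modT k lam a p q) ∘ₗ (modT k lam a r q) +
      (modT k lam a p r) ∘ₗ (modT k lam a r q) +
        (modT k lam a p q) ∘ₗ (modT k lam a r p) = 0 :=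
  modT_comm_relation_updown_general k lam a p r q hpr hpq hrq hp hr hq
end

section
/- Let a and b be words in {↑,↓} of lengths k and l, set K = k + l, and let D : V(a↓↑b) → V(ab) be the k-linear map given on basis vectors by D(v_i) = v_{i''} if i_{k+1} = i_{k+2} and D(v_i) = 0 otherwise, where i'' ∈ B^K is obtained from i ∈ B^{K+2} by deleting the entries in positions k+1 and k+2. Let p be a positive integer such that the p-th letter of the word a↓↓b is ↑. Then: (i) D ∘ (p,q)^{a↓↑b}_λ = (p,q)^{ab}_λ ∘ D whenever q ≠ p and p, q ≤ k; (ii) D ∘ (p,q)^{a↓↑b}_λ = (p,q−2)^{ab}_λ ∘ D whenever p ≤ k and k+2 < q ≤ K+2; (iii) D ∘ (p,q)^{a↓↑b}_λ = (p−2,q)^{ab}_λ ∘ D whenever p > k+2 and q ≤ k; (iv) D ∘ (p,q)^{a↓↑b}_λ = (p−2,q−2)^{ab}_λ ∘ D whenever q ≠ p and k+2 < p, q ≤ K+2; (v) D ∘ (p,k+1)^{a↓↑b}_λ + D ∘ (p,k+2)^{a↓↑b}_λ = 0. -/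
open Finset

/-- The concatenation `ab` of two words. -/
def catW {kk ll : ℕ} (a : Fin kk → Bool) (b : Fin ll → Bool) : Fin (kk + ll) → Bool :=
  fun t => if h : t.val < kk then a ⟨t.val, h⟩ else b ⟨t.val - kk, by have := t.isLt; omega⟩

/-- The word `a x y b` obtained by inserting the two letters `x, y` between `a` and `b`. -/
def insW {kk ll : ℕ} (a : Fin kk → Bool) (x y : Bool) (b : Fin ll → Bool) :
    Fin (kk + ll + 2) → Bool :=
  fun t =>
    if h : t.val < kk then a ⟨t.val, h⟩
    else if h2 : t.val = kk then x
    else if h3 : t.val = kk + 1 then y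
    else b ⟨t.val - (kk + 2), by have := t.isLt; omega⟩

/-- `i⟨c⟩`: insert the box `c` in positions `k+1` and `k+2` of the tuple `i`. -/
def insB {ℓ : ℕ} {lam : Fin ℓ → ℕ} {kk ll : ℕ} (i : Fin (kk + ll) → Box lam) (c : Box lam) :
    Fin (kk + ll + 2) → Box lam :=
  fun t =>
    if h : t.val < kk then i ⟨t.val, by omega⟩
    else if h2 : t.val < kk + 2 then c
    else i ⟨t.val - 2, by have := t.isLt; omega⟩

/-- `i''`: delete the entries in positions `k+1` and `k+2` of the tuple `i`. -/
def delB {ℓ : ℕ} {lam : Fin ℓ → ℕ} {kk ll : ℕ} (i : Fin (kk + ll + 2) → Box lam) :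
    Fin (kk + ll) → Box lam :=
  fun t =>
    if h : t.val < kk then i ⟨t.val, by have := t.isLt; omega⟩
    else i ⟨t.val + 2, by have := t.isLt; omega⟩

/-- The map `D : V(a↓↑b) → V(ab)`: `v_i ↦ v_{i''}` if `i_{k+1} = i_{k+2}`, else `0`. -/
noncomputable def Dmap (k : Type*) [CommRing k] {ℓ : ℕ} (lam : Fin ℓ → ℕ) (kk ll : ℕ) :
    V k lam (kk + ll + 2) →ₗ[k] V k lam (kk + ll) :=
  Finsupp.lift (V k lam (kk + ll)) k (Fin (kk + ll + 2) → Box lam)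
    (fun i =>
      if i ⟨kk, by omega⟩ = i ⟨kk + 1, by omega⟩ then Finsupp.single (delB i) (1 : k)
      else 0)

/-! `D` is restriction of tuples along the order embedding of the positions of `ab` into those
of `a↓↑b`, gated by equality of the two middle entries. A modified transposition at positions
away from the middle neither reads nor changes those entries, and it commutes with the
restriction because the embedding preserves the order of positions and the letters of the word;
this gives (i)–(iv). For (v), after applying `D` only the summand `c = i_{k+2}` of the
`↓`-transposition `(p, k+1)` survives, the `↑`-transposition `(p, k+2)` moves `i_p` into
position `k+2`, and the two resulting basis vectors coincide once the middle entries are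
deleted, with opposite signs. -/

section

variable (k : Type*) [CommRing k] {ℓ : ℕ} (lam : Fin ℓ → ℕ) {K N : ℕ}

noncomputable def contraction (φ : Fin K → Fin N) (r s : Fin N) :
    V k lam N →ₗ[k] V k lam K :=
  Finsupp.lift (V k lam K) k (Fin N → Box lam) fun i =>
    if i r = i s then Finsupp.single (i ∘ φ) 1 else 0

variable {k lam}

theorem modT_single (a : Fin K → Bool) (p q : Fin K) (j : Fin K → Box lam) :
    modT k lam a p q (Finsupp.single j 1) =
      if a q then
        if q < p then
          (if (j p).1 ≤ (j q).1 then Finsupp.single (j ∘ Equiv.swap p q) (1 : k) else 0)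
        else
          (if (j q).1 < (j p).1 then -Finsupp.single (j ∘ Equiv.swap p q) (1 : k) else 0)
      else
        if q < p then
          (if j p = j q then
            -∑ c ∈ univ.filter (fun c : Box lam => (j p).1 ≤ c.1),
              Finsupp.single (Function.update (Function.update j p c) q c) (1 : k)
          else 0)
        else
          (if j p = j q then
            ∑ c ∈ univ.filter (fun c : Box lam => c.1 < (j p).1),
              Finsupp.single (Function.update (Function.update j p c) q c) (1 : k)
          else 0) := by
  rw [modT, Finsupp.lift_apply, Finsupp.sum_single_index (by simp), one_smul]

theorem contraction_single (φ : Fin K → Fin N) (r s : Fin N) (i : Fin N → Box lam) :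
    contraction k lam φ r s (Finsupp.single i 1) =
      if i r = i s then Finsupp.single (i ∘ φ) 1 else 0 := by
  rw [contraction, Finsupp.lift_apply, Finsupp.sum_single_index (by simp), one_smul]

theorem contraction_comp_modT (φ : Fin K ↪o Fin N) {r s : Fin N}
    (hr : r ∉ Set.range φ) (hs : s ∉ Set.range φ) (a : Fin N → Bool) (p q : Fin K) :
    contraction k lam φ r s ∘ₗ modT k lam a (φ p) (φ q) =
      modT k lam (a ∘ φ) p q ∘ₗ contraction k lam φ r s := by
  refine Finsupp.lhom_ext' fun j => LinearMap.ext_ring ?_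
  have hφ : Function.Injective φ := φ.injective
  have hr' : ∀ t, φ t ≠ r := fun t h => hr ⟨t, h⟩
  have hs' : ∀ t, φ t ≠ s := fun t h => hs ⟨t, h⟩
  have contraction_swap : contraction k lam φ r s (Finsupp.single (j ∘ Equiv.swap (φ p) (φ q)) 1)
      = if j r = j s then Finsupp.single ((j ∘ φ) ∘ Equiv.swap p q) 1 else 0 := by
    rw [contraction_single, Function.comp_assoc, hφ.swap_comp, ← Function.comp_assoc]
    simp [Equiv.swap_apply_of_ne_of_ne (hr' p).symm (hr' q).symm,
      Equiv.swap_apply_of_ne_of_ne (hs' p).symm (hs' q).symm]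
  have contraction_update (c : Box lam) :
      contraction k lam φ r s
          (Finsupp.single (Function.update (Function.update j (φ p) c) (φ q) c) 1)
        = if j r = j s then
            Finsupp.single (Function.update (Function.update (j ∘ φ) p c) q c) 1 else 0 := by
    rw [contraction_single, Function.update_comp_eq_of_injective _ hφ,
      Function.update_comp_eq_of_injective _ hφ]
    simp [Function.update_of_ne (hr' p).symm, Function.update_of_ne (hr' q).symm,
      Function.update_of_ne (hs' p).symm, Function.update_of_ne (hs' q).symm]
  simp only [LinearMap.comp_apply, Finsupp.lsingle_apply, modT_single, contraction_single]
  by_cases hj : j r = j s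
  · simp only [if_pos hj, modT_single, Function.comp_apply, OrderEmbedding.lt_iff_lt]
    split_ifs <;> simp [hj, contraction_swap, contraction_update, map_sum]
  · simp only [if_neg hj, map_zero]
    split_ifs <;> simp [hj, contraction_swap, contraction_update, map_sum]

theorem contraction_comp_modT_add_contraction_comp_modT (φ : Fin K → Fin N) {r s P : Fin N}
    (hr : r ∉ Set.range φ) (hs : s ∉ Set.range φ) (hrs : r ≠ s) (hPr : P ≠ r) (hPs : P ≠ s)
    (hside : r < P ↔ s < P) {a : Fin N → Bool} (har : a r = false) (has : a s = true) :
    contraction k lam φ r s ∘ₗ modT k lam a P r + contraction k lam φ r s ∘ₗ modT k lam a P s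
      = 0 := by
  refine Finsupp.lhom_ext' fun j => LinearMap.ext_ring ?_
  have hr' : ∀ t, φ t ≠ r := fun t h => hr ⟨t, h⟩
  have hs' : ∀ t, φ t ≠ s := fun t h => hs ⟨t, h⟩
  have contraction_update (c : Box lam) :
      contraction k lam φ r s (Finsupp.single (Function.update (Function.update j P c) r c) 1)
        = if c = j s then Finsupp.single (Function.update j P (j s) ∘ φ) 1 else 0 := by
    rw [contraction_single, Function.update_comp_eq_of_forall_ne _ _ hr',
      Function.update_of_ne hrs.symm, Function.update_of_ne hPs.symm]
    simp only [Function.update_self]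
    split_ifs with hc <;> simp [hc]
  have contraction_swap : contraction k lam φ r s (Finsupp.single (j ∘ Equiv.swap P s) 1)
      = if j P = j r then Finsupp.single (Function.update j P (j s) ∘ φ) 1 else 0 := by
    rw [contraction_single, Equiv.comp_swap_eq_update, Function.update_comm hPs.symm,
      Function.update_comp_eq_of_forall_ne _ _ hs']
    simp [Function.update_of_ne hrs, Function.update_of_ne hPr.symm, eq_comm]
  simp only [LinearMap.add_apply, LinearMap.comp_apply, Finsupp.lsingle_apply, modT_single,
    har, has, hside, LinearMap.zero_apply, Bool.false_eq_true, if_false, if_true,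
    apply_ite (contraction k lam φ r s), map_neg, map_sum, map_zero, contraction_update,
    contraction_swap, Finset.sum_ite_eq', Finset.mem_filter, Finset.mem_univ, true_and]
  split_ifs <;> simp

end

section

variable {kk ll : ℕ}

def skipMid (kk ll : ℕ) : Fin (kk + ll) ↪o Fin (kk + ll + 2) :=
  OrderEmbedding.ofStrictMono
    (fun t => if t.val < kk then ⟨t, by omega⟩ else ⟨t + 2, by omega⟩)
    (fun s t hst => by
      simp only [Fin.lt_def] at hst ⊢
      split_ifs <;> simp only <;> omega)

theorem skipMid_of_lt (t : Fin (kk + ll)) (h : t.val < kk) :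
    skipMid kk ll t = ⟨t, by omega⟩ :=
  if_pos h

theorem skipMid_of_le (t : Fin (kk + ll)) (h : kk ≤ t.val) :
    skipMid kk ll t = ⟨t + 2, by omega⟩ :=
  if_neg (Nat.not_lt.mpr h)

theorem mk_notMem_range_skipMid {n : ℕ} (h₁ : kk ≤ n) (h₂ : n < kk + 2) :
    (⟨n, by omega⟩ : Fin (kk + ll + 2)) ∉ Set.range (skipMid kk ll) := by
  rintro ⟨t, ht⟩
  rcases Nat.lt_or_ge t.val kk with h | h
  · rw [skipMid_of_lt t h, Fin.mk.injEq] at ht; omega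
  · rw [skipMid_of_le t h, Fin.mk.injEq] at ht; omega

theorem insW_comp_skipMid (a : Fin kk → Bool) (x y : Bool) (b : Fin ll → Bool) :
    insW a x y b ∘ skipMid kk ll = catW a b := by
  funext t
  rcases Nat.lt_or_ge t.val kk with h | h
  · simp [insW, catW, skipMid_of_lt t h, h]
  · have h₀ : ¬(t : ℕ) + 2 < kk := by omega
    have h₁ : (t : ℕ) + 2 ≠ kk := by omega
    have h₂ : (t : ℕ) + 1 ≠ kk := by omega
    simp [insW, catW, skipMid_of_le t h, Nat.not_lt.mpr h, h₀, h₁, h₂]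

theorem delB_eq_comp_skipMid {ℓ : ℕ} {lam : Fin ℓ → ℕ} (i : Fin (kk + ll + 2) → Box lam) :
    delB i = i ∘ skipMid kk ll := by
  funext t
  rcases Nat.lt_or_ge t.val kk with h | h
  · simp [delB, h, skipMid_of_lt t h]
  · simp [delB, Nat.not_lt.mpr h, skipMid_of_le t h]

theorem Dmap_eq_contraction (k : Type*) [CommRing k] {ℓ : ℕ} (lam : Fin ℓ → ℕ) :
    Dmap k lam kk ll = contraction k lam (skipMid kk ll) ⟨kk, by omega⟩ ⟨kk + 1, by omega⟩ := by
  simp only [Dmap, contraction, delB_eq_comp_skipMid]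

theorem Dmap_comp_modT_of_skipMid (k : Type*) [CommRing k] {ℓ : ℕ} (lam : Fin ℓ → ℕ)
    (a : Fin kk → Bool) (x y : Bool) (b : Fin ll → Bool) {P Q : Fin (kk + ll)}
    {p q : Fin (kk + ll + 2)} (hp : skipMid kk ll P = p) (hq : skipMid kk ll Q = q) :
    Dmap k lam kk ll ∘ₗ modT k lam (insW a x y b) p q =
      modT k lam (catW a b) P Q ∘ₗ Dmap k lam kk ll := by
  subst hp hq
  rw [Dmap_eq_contraction, ← insW_comp_skipMid a x y b]
  exact contraction_comp_modT _ (mk_notMem_range_skipMid le_rfl (by omega))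
    (mk_notMem_range_skipMid (by omega) (by omega)) _ _ _

end

/-- Lemma 4.4: interaction of `D` with the modified transpositions.  Positions
`p, q` are 1-based as in the paper. -/
theorem Dmap_modT
    (k : Type*) [CommRing k] {ℓ : ℕ}
    (lam : Fin ℓ → ℕ) (kk ll : ℕ)
    (a : Fin kk → Bool) (b : Fin ll → Bool)
    (p : ℕ) (hpK : p ≤ kk + ll + 2)
    (hup : insW a false false b ⟨p - 1, by omega⟩ = true) :
    -- (i)
    (∀ (q : ℕ) (hq1 : 1 ≤ q) (hqk : q ≤ kk) (hpk : p ≤ kk) (hqp : q ≠ p),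
      (Dmap k lam kk ll) ∘ₗ
          (modT k lam (insW a false true b) ⟨p - 1, by omega⟩ ⟨q - 1, by omega⟩) =
        (modT k lam (catW a b) ⟨p - 1, by omega⟩ ⟨q - 1, by omega⟩) ∘ₗ
          (Dmap k lam kk ll)) ∧
    -- (ii)
    (∀ (q : ℕ) (hpk : p ≤ kk) (hq1 : kk + 2 < q) (hqK : q ≤ kk + ll + 2),
      (Dmap k lam kk ll) ∘ₗ
          (modT k lam (insW a false true b) ⟨p - 1, by omega⟩ ⟨q - 1, by omega⟩) =
        (modT k lam (catW a b) ⟨p - 1, by omega⟩ ⟨q - 2 - 1, by omega⟩) ∘ₗ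
          (Dmap k lam kk ll)) ∧
    -- (iii)
    (∀ (q : ℕ) (hpk : kk + 2 < p) (hq1 : 1 ≤ q) (hqk : q ≤ kk),
      (Dmap k lam kk ll) ∘ₗ
          (modT k lam (insW a false true b) ⟨p - 1, by omega⟩ ⟨q - 1, by omega⟩) =
        (modT k lam (catW a b) ⟨p - 2 - 1, by omega⟩ ⟨q - 1, by omega⟩) ∘ₗ
          (Dmap k lam kk ll)) ∧
    -- (iv)
    (∀ (q : ℕ) (hpk : kk + 2 < p) (hq1 : kk + 2 < q) (hqK : q ≤ kk + ll + 2) (hqp : q ≠ p),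
      (Dmap k lam kk ll) ∘ₗ
          (modT k lam (insW a false true b) ⟨p - 1, by omega⟩ ⟨q - 1, by omega⟩) =
        (modT k lam (catW a b) ⟨p - 2 - 1, by omega⟩ ⟨q - 2 - 1, by omega⟩) ∘ₗ
          (Dmap k lam kk ll)) ∧
    -- (v)
    ((Dmap k lam kk ll) ∘ₗ
        (modT k lam (insW a false true b) ⟨p - 1, by omega⟩ ⟨kk, by omega⟩) +
      (Dmap k lam kk ll) ∘ₗ
        (modT k lam (insW a false true b) ⟨p - 1, by omega⟩ ⟨kk + 1, by omega⟩) = 0) := by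
  have low {n : ℕ} (h : n < kk) (hn) : skipMid kk ll ⟨n, hn⟩ = ⟨n, by omega⟩ :=
    skipMid_of_lt _ h
  have high {n : ℕ} (h : kk + 2 < n) (hn) : skipMid kk ll ⟨n - 2 - 1, hn⟩ = ⟨n - 1, by omega⟩ :=
    (skipMid_of_le _ (by simp only; omega)).trans (Fin.ext (by simp only; omega))
  have hp_mid : p - 1 ≠ kk ∧ p - 1 ≠ kk + 1 := by
    constructor <;> rintro h <;> simp [insW, h] at hup
  refine ⟨fun q _ _ _ _ => ?_, fun q _ _ _ => ?_, fun q _ _ _ => ?_, fun q _ _ _ _ => ?_, ?_⟩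
  · exact Dmap_comp_modT_of_skipMid k lam a _ _ b (low (by omega) _) (low (by omega) _)
  · exact Dmap_comp_modT_of_skipMid k lam a _ _ b (low (by omega) _) (high (by omega) _)
  · exact Dmap_comp_modT_of_skipMid k lam a _ _ b (high (by omega) _) (low (by omega) _)
  · exact Dmap_comp_modT_of_skipMid k lam a _ _ b (high (by omega) _) (high (by omega) _)
  · rw [Dmap_eq_contraction]
    refine contraction_comp_modT_add_contraction_comp_modT _
      (mk_notMem_range_skipMid le_rfl (by omega)) (mk_notMem_range_skipMid (by omega) (by omega))
      ?_ ?_ ?_ ?_ (by simp [insW]) (by simp [insW]) <;>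
      simp only [ne_eq, Fin.mk.injEq, Fin.mk_lt_mk] <;> omega
end

section
/- Let a be a word in {↑,↓} of length K and consider the word ↑a of length K+1. Define X ∈ End_k(V(↑a)) by X(v_i) = e_1(v_i) + m_{col(i_1)} v_i + ∑_{q=2}^{K+1} (1,q)^{↑a}_λ v_i on basis vectors. For 1 ≤ t ≤ ℓ let g := (X − m_t·1) ∘ (X − m_{t+1}·1) ∘ ⋯ ∘ (X − m_ℓ·1). Then for every i ∈ B^{K+1}, the vector g(v_i) lies in the k-span of the basis vectors v_j with col(j_1) < t. In particular, if t = 1 then g = 0. -/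
open Finset

/-- The map `e` on boxes: move a box one step to the left along its row when possible. -/
def eBox {ℓ : ℕ} (lam : Fin ℓ → ℕ) (b : Box lam) : Option (Box lam) :=
  if h : 0 < b.1.val ∧ b.2.val < lam ⟨b.1.val - 1, by have := b.1.isLt; omega⟩ then
    some ⟨⟨b.1.val - 1, by have := b.1.isLt; omega⟩, ⟨b.2.val, h.2⟩⟩
  else none

/-- The endomorphism `e_p` of `V(a)` applying `e` in the `p`-th tensor position. -/
noncomputable def eEnd (k : Type*) [CommRing k] {ℓ K : ℕ} (lam : Fin ℓ → ℕ) (p : Fin K) :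
    Module.End k (V k lam K) :=
  Finsupp.lift (V k lam K) k (Fin K → Box lam)
    (fun i =>
      match eBox lam (i p) with
      | some c => Finsupp.single (Function.update i p c) (1 : k)
      | none => 0)

/-- The diagonal endomorphism `v_i ↦ m_{col(i_1)} v_i` of `V(↑a)`. -/
noncomputable def Mdiag (k : Type*) [CommRing k] {ℓ K : ℕ} (lam : Fin ℓ → ℕ)
    (m : Fin ℓ → k) : Module.End k (V k lam (K + 1)) :=
  Finsupp.lift (V k lam (K + 1)) k (Fin (K + 1) → Box lam)
    (fun i => Finsupp.single i (m (i 0).1))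

/-- The endomorphism `X` of `V(↑a)`:
`X v_i = e_1 v_i + m_{col(i_1)} v_i + ∑_{q≠1} (1,q)^{↑a}_λ v_i`. -/
noncomputable def Xop (k : Type*) [CommRing k] {ℓ K : ℕ} (lam : Fin ℓ → ℕ)
    (m : Fin ℓ → k) (a : Fin K → Bool) : Module.End k (V k lam (K + 1)) :=
  eEnd k lam (0 : Fin (K + 1)) + Mdiag k lam m +
    ∑ q ∈ Finset.univ.erase (0 : Fin (K + 1)),
      modT k lam (Fin.cons true a) (0 : Fin (K + 1)) q

/-!
Up to the diagonal term `m_{col(i_1)} v_i`, every term of `X v_i` has its first box in a column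
strictly left of `col(i_1)`: `e_1` moves that box one step left, and for `q > 1` the modified
transposition `(1,q)` only puts a box of smaller column in position 1. Hence `X − m_u` maps the
span of the `v_j` with `col(j_1) ≤ u` into the span of those with `col(j_1) < u`, and the factors
of `g`, applied from `m_ℓ` down to `m_t`, lower this bound from `ℓ` to `t − 1`.
-/

theorem Finsupp.lift_apply_single_one {R X M : Type*} [Semiring R] [AddCommMonoid M]
    [Module R M] (f : X → M) (x : X) : Finsupp.lift M R X f (Finsupp.single x 1) = f x := by
  simp only [Finsupp.lift_apply, zero_smul, Finsupp.sum_single_index, one_smul]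

theorem prod_map_finRange_apply_mem {R M : Type*} [Semiring R] [AddCommMonoid M] [Module R M]
    {n : ℕ} (S : ℕ → Submodule R M) (f : Fin n → Module.End R M)
    (hf : ∀ s : Fin n, ∀ v ∈ S (s + 1), f s v ∈ S s) {v : M} (hv : v ∈ S n) :
    ((List.finRange n).map f).prod v ∈ S 0 := by
  induction n generalizing S with
  | zero => simpa using hv
  | succ n ih =>
    rw [List.finRange_succ, List.map_cons, List.prod_cons, List.map_map, Module.End.mul_apply]
    exact hf 0 _ (ih (fun c => S (c + 1)) (f ∘ Fin.succ) (fun s => hf s.succ) hv)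

section

variable {k : Type*} [CommRing k] {ℓ : ℕ} {lam : Fin ℓ → ℕ}

variable (k lam) in
noncomputable def supportedColLt {K : ℕ} (p : Fin K) (c : ℕ) : Submodule k (V k lam K) :=
  Finsupp.supported k k {j | (j p).1.val < c}

lemma single_mem_supportedColLt {K : ℕ} {p : Fin K} {c : ℕ} {j : Fin K → Box lam}
    (h : (j p).1.val < c) : Finsupp.single j (1 : k) ∈ supportedColLt k lam p c :=
  Finsupp.single_mem_supported k 1 h

lemma supportedColLt_mono {K : ℕ} {p : Fin K} {c c' : ℕ} (h : c ≤ c') :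
    supportedColLt k lam p c ≤ supportedColLt k lam p c' :=
  Finsupp.supported_mono fun _ hj => lt_of_lt_of_le hj h

lemma supportedColLt_zero {K : ℕ} (p : Fin K) : supportedColLt k lam p 0 = ⊥ := by
  simp [supportedColLt, Finsupp.supported_empty]

lemma eBox_col_lt {b c : Box lam} (h : eBox lam b = some c) : c.1.val < b.1.val := by
  unfold eBox at h
  split_ifs at h with hb
  cases h
  exact Nat.sub_lt hb.1 one_pos

lemma eEnd_single_mem {K : ℕ} (p : Fin K) (j : Fin K → Box lam) :
    eEnd k lam p (Finsupp.single j 1) ∈ supportedColLt k lam p (j p).1.val := by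
  rw [eEnd, Finsupp.lift_apply_single_one]
  rcases he : eBox lam (j p) with _ | c
  · exact zero_mem _
  · exact single_mem_supportedColLt (by simpa using eBox_col_lt he)

lemma modT_single_mem {K : ℕ} (a : Fin K → Bool) {p q : Fin K} (hpq : p < q)
    (j : Fin K → Box lam) :
    modT k lam a p q (Finsupp.single j 1) ∈ supportedColLt k lam p (j p).1.val := by
  simp only [modT, Finsupp.lift_apply_single_one, if_neg hpq.not_gt]
  split_ifs with _ hcol
  · exact neg_mem (single_mem_supportedColLt (by simpa [Equiv.swap_apply_left] using hcol))
  · exact zero_mem _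
  · refine sum_mem fun c hc => single_mem_supportedColLt ?_
    rw [Function.update_of_ne hpq.ne, Function.update_self]
    exact (mem_filter.mp hc).2
  · exact zero_mem _

lemma Mdiag_single {K : ℕ} (m : Fin ℓ → k) (j : Fin (K + 1) → Box lam) :
    Mdiag k lam m (Finsupp.single j 1) = m (j 0).1 • Finsupp.single j 1 := by
  rw [Mdiag, Finsupp.lift_apply_single_one, Finsupp.smul_single_one]

lemma Xop_sub_smul_single_mem {K : ℕ} (m : Fin ℓ → k) (a : Fin K → Bool)
    (j : Fin (K + 1) → Box lam) :
    Xop k lam m a (Finsupp.single j 1) - m (j 0).1 • Finsupp.single j 1 ∈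
      supportedColLt k lam 0 (j 0).1.val := by
  have hX : Xop k lam m a (Finsupp.single j 1) - m (j 0).1 • Finsupp.single j 1 =
      eEnd k lam 0 (Finsupp.single j 1) +
        ∑ q ∈ univ.erase 0, modT k lam (Fin.cons true a) 0 q (Finsupp.single j 1) := by
    simp only [Xop, LinearMap.add_apply, LinearMap.sum_apply, Mdiag_single]
    abel
  rw [hX]
  exact add_mem (eEnd_single_mem 0 j) (sum_mem fun q hq =>
    modT_single_mem _ (Fin.pos_iff_ne_zero.mpr (ne_of_mem_erase hq)) j)

lemma Xop_sub_smul_mem {K : ℕ} (m : Fin ℓ → k) (a : Fin K → Bool) (u : Fin ℓ)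
    {v : V k lam (K + 1)} (hv : v ∈ supportedColLt k lam 0 (u + 1)) :
    (Xop k lam m a - m u • 1) v ∈ supportedColLt k lam 0 u := by
  suffices supportedColLt k lam 0 (u + 1) ≤
      (supportedColLt k lam (0 : Fin (K + 1)) u).comap (Xop k lam m a - m u • 1) from this hv
  rw [supportedColLt, Finsupp.supported_eq_span_single, Submodule.span_le]
  rintro _ ⟨j, hj, rfl⟩
  have hsplit : (Xop k lam m a - m u • 1) (Finsupp.single j 1) =
      (Xop k lam m a (Finsupp.single j 1) - m (j 0).1 • Finsupp.single j 1) +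
        (m (j 0).1 - m u) • Finsupp.single j 1 := by
    simp only [LinearMap.sub_apply, LinearMap.smul_apply, Module.End.one_apply, sub_smul]
    abel
  rw [SetLike.mem_coe, Submodule.mem_comap, hsplit]
  refine add_mem (supportedColLt_mono (Nat.lt_succ_iff.mp hj) (Xop_sub_smul_single_mem m a j)) ?_
  rcases (Nat.lt_succ_iff.mp hj).lt_or_eq with hlt | heq
  · exact Submodule.smul_mem _ _ (single_mem_supportedColLt hlt)
  · rw [Fin.ext heq, sub_self, zero_smul]
    exact zero_mem _

end

/-- Lemma 4.8: for `g = (X − m_t)∘(X − m_{t+1})∘⋯∘(X − m_ℓ)`, each `g(v_i)` lies in the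
span of the basis vectors `v_j` with `col(j_1) < t` (columns 1-based); in particular
`g = 0` when `t = 1`. -/
theorem Xop_poly_span
    (k : Type*) [CommRing k] {ℓ K : ℕ}
    (lam : Fin ℓ → ℕ)
    (m : Fin ℓ → k) (a : Fin K → Bool)
    (t : ℕ) (ht1 : 1 ≤ t) (ht2 : t ≤ ℓ)
    (g : Module.End k (V k lam (K + 1)))
    (hg : g = ((List.finRange (ℓ + 1 - t)).map
        (fun s => Xop k lam m a -
          (m ⟨t - 1 + s.val, by have := s.isLt; omega⟩) • (1 : Module.End k (V k lam (K + 1))))).prod) :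
    (∀ i : Fin (K + 1) → Box lam,
      g (Finsupp.single i (1 : k)) ∈
        Submodule.span k
          ((fun j : Fin (K + 1) → Box lam => (Finsupp.single j (1 : k) : V k lam (K + 1))) ''
            {j | (j 0).1.val + 1 < t})) ∧
    (t = 1 → g = 0) := by
  have hmem (i : Fin (K + 1) → Box lam) :
      g (Finsupp.single i 1) ∈ supportedColLt k lam 0 (t - 1) := by
    rw [hg]
    exact prod_map_finRange_apply_mem (fun c => supportedColLt k lam 0 (t - 1 + c)) _
      (fun s _ hv => Xop_sub_smul_mem m a _ hv)
      (single_mem_supportedColLt (by have := (i 0).1.isLt; omega))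
  have hspan : supportedColLt k lam (0 : Fin (K + 1)) (t - 1) =
      Submodule.span k ((fun j => Finsupp.single j 1) '' {j | (j 0).1.val + 1 < t}) := by
    rw [supportedColLt, Finsupp.supported_eq_span_single]
    congr! 3
    ext j
    omega
  refine ⟨fun i => hspan ▸ hmem i, fun ht => Finsupp.basisSingleOne.ext fun i => ?_⟩
  simpa [ht, supportedColLt_zero] using hmem i
end

section
/- Let k be an algebraically closed field of characteristic zero, ℓ ≥ 1, r ≥ 1 an integer, and m_1,…,m_ℓ ∈ k. For each unimodular sequence λ = (λ_1,…,λ_ℓ) of positive integers with λ_i ≥ r for all i, define the point δ(λ) = (δ_1,…,δ_ℓ) ∈ k^ℓ by δ_K := ∑_{i+j=K, i,j≥0} h_i(m_1,…,m_ℓ) · e_j(λ_1−m_1,…,λ_ℓ−m_ℓ) for K = 1,…,ℓ (the integers λ_p viewed in k via the natural map). Then the set of all such points δ(λ) is Zariski dense in k^ℓ: every polynomial p ∈ k[X_1,…,X_ℓ] satisfying p(δ(λ)) = 0 for all unimodular sequences λ of positive integers with min_i λ_i ≥ r is the zero polynomial. -/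
/-!
The map `δ` is polynomial in `λ`, so `p ∘ δ` is a polynomial that vanishes at every
nondecreasing sequence of integers `> r`. These points contain `N × ⋯ × N` grids for every
`N` (stack blocks of `N` consecutive integers), so `p ∘ δ = 0` by the Combinatorial
Nullstellensatz. On the other hand `δ` is onto `k^ℓ`: the definition of `δ` reads
`(∑ hᵢ(m) tⁱ) · (∑ eⱼ(λ - m) tʲ) = 1 + ∑ δ_K t^K` up to degree `ℓ`, so inverting the
first series prescribes `e₁, …, e_ℓ`, and over an algebraically closed field these are
realized by the roots of a monic polynomial (Vieta). Hence `p` vanishes on `k^ℓ`.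
-/

open Finset

/-- The complete homogeneous symmetric polynomial of degree `d` in the family of
elements `x i`, `i ∈ S`: the sum of all monomials of total degree `d`. -/
noncomputable def hsym {R : Type*} [CommRing R] {ι : Type*} [DecidableEq ι]
    (S : Finset ι) (x : ι → R) (d : ℕ) : R :=
  ∑ t ∈ S.sym d, ((t : Multiset ι).map x).prod

/-- The elementary symmetric polynomial of degree `d` in the family of elements
`x i`, `i ∈ S`: the sum of all products of `d` distinct members. -/
noncomputable def esym {R : Type*} [CommRing R] {ι : Type*} [DecidableEq ι]
    (S : Finset ι) (x : ι → R) (d : ℕ) : R :=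
  ∑ t ∈ S.powersetCard d, ∏ i ∈ t, x i

section SymmetricFunctions

variable {R S : Type*} [CommRing R] [CommRing S] {ι : Type*} [DecidableEq ι]

lemma hsym_zero (s : Finset ι) (x : ι → R) : hsym s x 0 = 1 := by
  simp only [hsym, Finset.sym_zero, Finset.sum_singleton]
  rfl

lemma map_hsym (φ : R →+* S) (s : Finset ι) (x : ι → R) (d : ℕ) :
    φ (hsym s x d) = hsym s (φ ∘ x) d := by
  simp [hsym, map_sum, map_multiset_prod, Multiset.map_map]

lemma map_esym (φ : R →+* S) (s : Finset ι) (x : ι → R) (d : ℕ) :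
    φ (esym s x d) = esym s (φ ∘ x) d := by
  simp [esym, map_sum, map_prod]

lemma esym_eq_esymm_map (s : Finset ι) (x : ι → R) (d : ℕ) :
    esym s x d = (s.val.map x).esymm d :=
  (Finset.esymm_map_val x s d).symm

end SymmetricFunctions

lemma Multiset.exists_fin_map_univ_eq {α : Type*} {n : ℕ} (s : Multiset α)
    (hs : Multiset.card s = n) : ∃ z : Fin n → α, Finset.univ.val.map z = s := by
  induction s using Quotient.inductionOn with
  | h l =>
    obtain rfl : l.length = n := hs
    exact ⟨l.get, by rw [Fin.univ_val_map, List.ofFn_get]; rfl⟩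

open Polynomial in
lemma exists_multiset_esymm_eq {k : Type*} [Field k] [IsAlgClosed k] (n : ℕ) (E : ℕ → k)
    (hE : E 0 = 1) : ∃ s : Multiset k, Multiset.card s = n ∧ ∀ d ≤ n, s.esymm d = E d := by
  set P : k[X] := ∑ j ∈ range (n + 1), monomial j ((-1) ^ (n - j) * E (n - j))
  have hcoeff : ∀ j ≤ n, P.coeff j = (-1) ^ (n - j) * E (n - j) := by
    intro j hj
    simp [P, coeff_monomial, hj]
  have hdeg : P.natDegree = n := by
    refine natDegree_eq_of_le_of_coeff_ne_zero ?_ (by simp [hcoeff, hE])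
    exact natDegree_sum_le_of_forall_le _ _ fun j hj =>
      (natDegree_monomial_le _).trans (Nat.lt_succ_iff.mp (mem_range.mp hj))
  have hlead : P.leadingCoeff = 1 := by
    rw [leadingCoeff, hdeg, hcoeff n le_rfl, Nat.sub_self, hE, pow_zero, one_mul]
  refine ⟨P.roots, IsAlgClosed.card_roots_eq_natDegree.trans hdeg, fun d hd => ?_⟩
  have hvieta := coeff_eq_esymm_roots_of_card IsAlgClosed.card_roots_eq_natDegree
    (p := P) (k := n - d) (by omega)
  rw [hcoeff _ (by omega), hdeg, hlead, Nat.sub_sub_self hd, one_mul] at hvieta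
  exact (mul_left_cancel₀ (pow_ne_zero _ (neg_ne_zero.mpr one_ne_zero)) hvieta).symm

open PowerSeries in
lemma exists_antidiagonal_sum_mul_eq {k : Type*} [Field k] (h : ℕ → k) (h0 : h 0 = 1)
    (y : ℕ → k) : ∃ E : ℕ → k, E 0 = 1 ∧
      ∀ K, ∑ ij ∈ antidiagonal (K + 1), h ij.1 * E ij.2 = y K := by
  obtain ⟨F, hF⟩ : ∃ F, PowerSeries.mk h * F = 1 + X * PowerSeries.mk y :=
    ⟨(PowerSeries.mk h)⁻¹ * (1 + X * PowerSeries.mk y), by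
      rw [← mul_assoc, PowerSeries.mul_inv_cancel _ (by simp [h0]), one_mul]⟩
  refine ⟨fun j => coeff j F, by simpa [h0] using congrArg (coeff 0) hF, fun K => ?_⟩
  have hK := congrArg (coeff (K + 1)) hF
  rw [coeff_mul] at hK
  simpa only [coeff_mk, map_add, coeff_succ_X_mul, coeff_one, if_neg K.succ_ne_zero,
    zero_add] using hK

section Delta

variable {R S : Type*} [CommRing R] [CommRing S] {ℓ : ℕ}

noncomputable def delta (m x : Fin ℓ → R) (K : Fin ℓ) : R :=
  ∑ ij ∈ antidiagonal (K.val + 1), hsym univ m ij.1 * esym univ (fun q => x q - m q) ij.2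

lemma map_delta (φ : R →+* S) (m x : Fin ℓ → R) (K : Fin ℓ) :
    φ (delta m x K) = delta (φ ∘ m) (φ ∘ x) K := by
  simp [delta, map_hsym, map_esym, Function.comp_def]

open MvPolynomial in
lemma eval_bind₁_delta (m x : Fin ℓ → R) (p : MvPolynomial (Fin ℓ) R) :
    eval x (bind₁ (delta (C ∘ m) X) p) = eval (delta m x) p := by
  refine (eval₂Hom_bind₁ _ _ _ _).trans (congrArg (eval · p) (funext fun K => ?_))
  refine (map_delta (eval x) _ _ K).trans ?_
  congr <;> funext <;> simp

end Delta

lemma delta_surjective {k : Type*} [Field k] [IsAlgClosed k] {ℓ : ℕ} (m : Fin ℓ → k) :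
    Function.Surjective (delta m) := by
  intro y
  obtain ⟨E, hE0, hE⟩ := exists_antidiagonal_sum_mul_eq (hsym univ m) (hsym_zero _ _)
    fun K => if h : K < ℓ then y ⟨K, h⟩ else 0
  obtain ⟨s, hs, hsE⟩ := exists_multiset_esymm_eq ℓ E hE0
  obtain ⟨z, rfl⟩ := s.exists_fin_map_univ_eq hs
  refine ⟨z + m, funext fun K => ?_⟩
  have hz : ∀ ij ∈ antidiagonal (K.val + 1),
      esym univ (fun q => (z + m) q - m q) ij.2 = E ij.2 := fun ij hij => by
    rw [HasAntidiagonal.mem_antidiagonal] at hij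
    simp only [Pi.add_apply, add_sub_cancel_right]
    rw [esym_eq_esymm_map, hsE _ (by omega)]
  rw [delta, sum_congr rfl fun ij hij => by rw [hz ij hij], hE, dif_pos K.isLt]

lemma Monotone.unimodular {ℓ : ℕ} {lam : Fin ℓ → ℕ} (hℓ : 0 < ℓ) (h : Monotone lam) :
    Unimodular lam :=
  ⟨⟨ℓ - 1, by omega⟩, fun _ _ hij _ => h hij, fun i j hi hij => by
    obtain rfl : i = j := by rw [Fin.le_def, Fin.val_mk] at hi; omega
    exact le_rfl⟩

/-- Blocks of `N > totalDegree q` consecutive integers, the `i`-th block lying below the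
`(i+1)`-st, form a grid of monotone sequences large enough for the Combinatorial
Nullstellensatz. -/
lemma MvPolynomial.eq_zero_of_eval_natCast_monotone {R : Type*} [CommRing R] [IsDomain R]
    [CharZero R] {n : ℕ} (q : MvPolynomial (Fin n) R) (r : ℕ)
    (h : ∀ lam : Fin n → ℕ, Monotone lam → (∀ i, r ≤ lam i) →
      eval (fun i => (lam i : R)) q = 0) : q = 0 := by
  classical
  set N := q.totalDegree + 1
  refine eq_zero_of_eval_zero_at_prod_finset q
    (fun i => (Ico (r + i.val * N) (r + (i.val + 1) * N)).image (Nat.cast : ℕ → R))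
    (fun i => ?_) (fun x hx => ?_)
  · rw [card_image_of_injective _ Nat.cast_injective, Nat.card_Ico, add_mul, one_mul]
    have := degreeOf_le_totalDegree q i
    omega
  · choose lam hlam hx using fun i => mem_image.mp (hx i)
    obtain rfl : x = fun i => (lam i : R) := _root_.funext fun i => (hx i).symm
    refine h lam (fun i j hij => ?_) fun i =>
      (mem_Ico.mp (hlam i)).1.trans' (Nat.le_add_right _ _)
    rcases hij.lt_or_eq with hlt | rfl
    · have hblock : (i.val + 1) * N ≤ j.val * N := Nat.mul_le_mul_right _ hlt
      have := mem_Ico.mp (hlam i)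
      have := mem_Ico.mp (hlam j)
      omega
    · exact le_rfl

theorem delta_points_zariski_dense_general
    (k : Type*) [Field k] [IsAlgClosed k] [CharZero k]
    (ℓ : ℕ) (hℓ : 1 ≤ ℓ) (r : ℕ) (m : Fin ℓ → k)
    (p : MvPolynomial (Fin ℓ) k)
    (hp : ∀ lam : Fin ℓ → ℕ, (∀ i, 0 < lam i) → Unimodular lam → (∀ i, r ≤ lam i) →
      MvPolynomial.eval
        (fun K : Fin ℓ =>
          ∑ ij ∈ Finset.HasAntidiagonal.antidiagonal (K.val + 1),
            hsym Finset.univ m ij.1 *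
              esym Finset.univ (fun q : Fin ℓ => (lam q : k) - m q) ij.2) p = 0) :
    p = 0 := by
  have hbind : MvPolynomial.bind₁ (delta (MvPolynomial.C ∘ m) MvPolynomial.X) p = 0 := by
    refine MvPolynomial.eq_zero_of_eval_natCast_monotone _ (r + 1) fun lam hmono hlam => ?_
    rw [eval_bind₁_delta]
    exact hp lam (fun i => (Nat.succ_pos r).trans_le (hlam i)) (hmono.unimodular hℓ)
      fun i => (Nat.le_succ r).trans (hlam i)
  refine MvPolynomial.funext fun y => ?_
  obtain ⟨x, rfl⟩ := delta_surjective m y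
  rw [← eval_bind₁_delta, hbind, map_zero, map_zero]

/-- Zariski density: any polynomial vanishing at all the parameter points
`δ(λ) = (δ_1,…,δ_ℓ)`, for `λ` a unimodular sequence of positive integers with all
parts `≥ r`, is the zero polynomial. -/
theorem delta_points_zariski_dense
    (k : Type*) [Field k] [IsAlgClosed k] [CharZero k]
    (ℓ : ℕ) (hℓ : 1 ≤ ℓ) (r : ℕ) (hr : 1 ≤ r) (m : Fin ℓ → k)
    (p : MvPolynomial (Fin ℓ) k)
    (hp : ∀ lam : Fin ℓ → ℕ, (∀ i, 0 < lam i) → Unimodular lam → (∀ i, r ≤ lam i) →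
      MvPolynomial.eval
        (fun K : Fin ℓ =>
          ∑ ij ∈ Finset.HasAntidiagonal.antidiagonal (K.val + 1),
            hsym Finset.univ m ij.1 *
              esym Finset.univ (fun q : Fin ℓ => (lam q : k) - m q) ij.2) p = 0) :
    p = 0 :=
  delta_points_zariski_dense_general k ℓ hℓ r m p hp
end
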